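/- Let H : ℝ^d → ℝ be a C² integrable Hamiltonian with ‖d²H(p)‖ ≤ C for all p, and let R = (R^t)_{t≥0} be a variational operator for H. Let F be a family of C² equi-Lipschitz functions on ℝ^d whose second derivatives are bounded by B, such that u(q) = min_{f∈F} f(q) is attained for every q, and such that for every q ∈ ℝ^d and every p ∈ ∂u(q) there exists f ∈ F with f(q) = u(q) and df(q) = p. For each f ∈ F let u_f : [0,T] × ℝ^d → ℝ be a C² solution of ∂ₜu_f + H(∂_q u_f) = 0 with u_f(0,·) = f, where 0 < T ≤ 1/(BC). Then for all 0 ≤ t ≤ T and q ∈ ℝ^d, R^t u(q) = min_{f∈F} u_f(t,q). -/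

import Mathlib

/-!
Let `p₀ = ∇f(q₀)` and `v = ∇H(p₀)`. Along the line `s ↦ (s, q₀ + s v)`, the spatial gradient
`p(s)` of a `C²` solution `w` of `∂ₜw + H(∂_q w) = 0` satisfies, by the equation differentiated
in `q` and the symmetry of `D²w`, the ODE `p' = D_q(∂_q w)(v - ∇H(p))`. Its right-hand side is
locally Lipschitz in `p` and vanishes at `p₀`, so by uniqueness `p ≡ p₀`; then
`d/ds w(s, q₀ + s v) = ⟨p₀, v⟩ - H(p₀)` and `w(t, q₀ + t v) = f(q₀) + t(⟨p₀, v⟩ - H(p₀))`,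
which is the value the variational property assigns to the pair `(q₀, p₀)`. The Clarke
derivative of a `C¹` function is its gradient, so for `f ∈ F` monotonicity gives
`Rᵗu ≤ Rᵗf = u_f(t, ·)`; conversely the pair `(q₀, p₀)` produced for `u` is, by the hypothesis
on `∂u`, the pair `(q₀, ∇f(q₀))` of some `f ∈ F` with `f(q₀) = u(q₀)`, so `Rᵗu(q) = u_f(t, q)`.
-/

open Filter Topology Set

noncomputable section

/-- `ℝ^d` with the euclidean structure. -/
abbrev Ed (d : ℕ) := EuclideanSpace ℝ (Fin d)

/-- The Clarke derivative of a Lipschitz function `u : ℝ^d → ℝ` at `q`. -/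
def clarke {d : ℕ} (u : Ed d → ℝ) (q : Ed d) : Set (Ed d) :=
  convexHull ℝ {p | ∃ qn : ℕ → Ed d,
    (∀ n, DifferentiableAt ℝ u (qn n)) ∧
    Tendsto qn atTop (𝓝 q) ∧
    Tendsto (fun n => gradient u (qn n)) atTop (𝓝 p)}

/-- A variational operator for an integrable Hamiltonian `H`. -/
def IsVariationalOperator {d : ℕ} (H : Ed d → ℝ) (R : ℝ → (Ed d → ℝ) → Ed d → ℝ) : Prop :=
  (∀ t : ℝ, 0 ≤ t → ∀ u : Ed d → ℝ, (∃ K, LipschitzWith K u) →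
      ∃ K, LipschitzWith K (R t u)) ∧
  (∀ t : ℝ, 0 ≤ t → ∀ u v : Ed d → ℝ, (∃ K, LipschitzWith K u) →
      (∃ K, LipschitzWith K v) → (∀ q, u q ≤ v q) → ∀ q, R t u q ≤ R t v q) ∧
  (∀ t : ℝ, 0 ≤ t → ∀ u : Ed d → ℝ, (∃ K, LipschitzWith K u) → ∀ c : ℝ, ∀ q,
      R t (fun x => c + u x) q = c + R t u q) ∧
  (∀ t : ℝ, 0 ≤ t → ∀ u : Ed d → ℝ, (∃ K, LipschitzWith K u) → ∀ q : Ed d,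
      ∃ q₀ p₀ : Ed d, p₀ ∈ clarke u q₀ ∧ q = q₀ + t • gradient H p₀ ∧
        R t u q = u q₀ + t * ((inner ℝ p₀ (gradient H p₀) : ℝ) - H p₀))

open InnerProductSpace

section Riesz

variable (E : Type*) [NormedAddCommGroup E] [InnerProductSpace ℝ E] [CompleteSpace E]

def rieszCLM : StrongDual ℝ E →L[ℝ] E :=
  (toDual ℝ E).symm.toContinuousLinearEquiv.toContinuousLinearMap

variable {E}

theorem inner_rieszCLM_apply (ℓ : StrongDual ℝ E) (z : E) : inner ℝ (rieszCLM E ℓ) z = ℓ z :=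
  toDual_symm_apply

theorem gradient_eq_rieszCLM (g : E → ℝ) (x : E) : gradient g x = rieszCLM E (fderiv ℝ g x) := rfl

theorem ContDiff.gradient {g : E → ℝ} {n : WithTop ℕ∞} (hg : ContDiff ℝ (n + 1) g) :
    ContDiff ℝ n (gradient g) :=
  (rieszCLM E).contDiff.comp (hg.fderiv_right le_rfl)

end Riesz

theorem eqOn_const_of_hasDerivAt_apply_sub {E F : Type*} [NormedAddCommGroup E] [NormedSpace ℝ E]
    [NormedAddCommGroup F] [NormedSpace ℝ F] {g : E → F} (hg : LocallyLipschitz g)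
    {a b : ℝ} {A : ℝ → F →L[ℝ] E} (hA : ContinuousOn A (Icc a b)) {p : ℝ → E} {p₀ : E}
    (hp : ∀ s ∈ Icc a b, HasDerivAt p (A s (g p₀ - g (p s))) s) (hpa : p a = p₀) :
    EqOn p (fun _ => p₀) (Icc a b) := by
  have hpc : ContinuousOn p (Icc a b) := fun s hs => (hp s hs).continuousAt.continuousWithinAt
  set S := p '' Icc a b ∪ {p₀}
  have hS : IsCompact S := (isCompact_Icc.image_of_continuousOn hpc).union isCompact_singleton
  obtain ⟨L, hL⟩ := hg.locallyLipschitzOn.exists_lipschitzOnWith_of_compact hS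
  obtain ⟨M, hM⟩ := isCompact_Icc.exists_bound_of_continuousOn hA
  have hlip : ∀ s ∈ Ico a b, LipschitzOnWith (M.toNNReal * L) (fun y => A s (g p₀ - g y)) S := by
    intro s hs
    have hAs : ‖A s‖₊ ≤ M.toNNReal := by
      simpa using Real.toNNReal_le_toNNReal (hM s (Ico_subset_Icc_self hs))
    refine ((A s).lipschitz.comp_lipschitzOnWith
      (((LipschitzWith.const (g p₀)).lipschitzOnWith).sub hL)).weaken ?_
    rw [zero_add]
    gcongr
  refine ODE_solution_unique_of_mem_Icc_right hlip hpc
    (fun s hs => (hp s (Ico_subset_Icc_self hs)).hasDerivWithinAt)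
    (fun s hs => Or.inl (mem_image_of_mem p (Ico_subset_Icc_self hs))) continuousOn_const
    (fun s _ => by simpa using (hasDerivWithinAt_const s (Ici s) p₀)) (fun _ _ => Or.inr rfl) hpa

theorem hasDerivAt_prodMk_add_smul {F : Type*} [NormedAddCommGroup F] [NormedSpace ℝ F] (q₀ v : F)
    (s : ℝ) : HasDerivAt (fun s : ℝ => (s, q₀ + s • v)) (1, v) s :=
  (hasDerivAt_id s).prodMk (by simpa using ((hasDerivAt_id s).smul_const v).const_add q₀)

theorem deriv_apply_prodMk_left {F : Type*} [NormedAddCommGroup F] [NormedSpace ℝ F]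
    {w : ℝ × F → ℝ} (hw : Differentiable ℝ w) (x : ℝ × F) :
    deriv (fun s => w (s, x.2)) x.1 = fderiv ℝ w x (1, 0) := by
  have := (hw x).hasFDerivAt.comp_hasDerivAt x.1 ((hasFDerivAt_prodMk_left x.1 x.2).hasDerivAt)
  simpa [Function.comp_def] using this.deriv

section Characteristics

variable {E : Type*} [NormedAddCommGroup E] [InnerProductSpace ℝ E] [CompleteSpace E]

def spatialGradient (w : ℝ × E → ℝ) (x : ℝ × E) : E :=
  gradient (fun q => w (x.1, q)) x.2

theorem spatialGradient_eq {w : ℝ × E → ℝ} (hw : Differentiable ℝ w) :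
    spatialGradient w = fun x => rieszCLM E ((fderiv ℝ w x).comp (.inr ℝ ℝ E)) := by
  funext x
  have := (hw (x.1, x.2)).hasFDerivAt.comp x.2 (hasFDerivAt_prodMk_right x.1 x.2)
  exact congrArg (rieszCLM E) this.fderiv

theorem inner_spatialGradient {w : ℝ × E → ℝ} (hw : Differentiable ℝ w) (x : ℝ × E) (z : E) :
    inner ℝ (spatialGradient w x) z = fderiv ℝ w x (0, z) := by
  simp [spatialGradient_eq hw, inner_rieszCLM_apply]

theorem hasFDerivAt_spatialGradient {w : ℝ × E → ℝ} (hw : ContDiff ℝ 2 w) (x : ℝ × E) :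
    HasFDerivAt (spatialGradient w)
      ((rieszCLM E ∘L (ContinuousLinearMap.inr ℝ ℝ E).precomp ℝ) ∘L fderiv ℝ (fderiv ℝ w) x) x := by
  rw [spatialGradient_eq (hw.differentiable (by norm_num))]
  exact (rieszCLM E ∘L (ContinuousLinearMap.inr ℝ ℝ E).precomp ℝ).hasFDerivAt.comp x
    ((hw.fderiv_right (m := 1) le_rfl).differentiable one_ne_zero x).hasFDerivAt

theorem contDiff_spatialGradient {w : ℝ × E → ℝ} (hw : ContDiff ℝ 2 w) :
    ContDiff ℝ 1 (spatialGradient w) := by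
  rw [spatialGradient_eq (hw.differentiable (by norm_num))]
  exact (rieszCLM E ∘L (ContinuousLinearMap.inr ℝ ℝ E).precomp ℝ).contDiff.comp
    (hw.fderiv_right (m := 1) (by norm_num))

theorem inner_fderiv_spatialGradient {w : ℝ × E → ℝ} (hw : ContDiff ℝ 2 w) (x h : ℝ × E) (z : E) :
    inner ℝ (fderiv ℝ (spatialGradient w) x h) z = fderiv ℝ (fderiv ℝ w) x h (0, z) := by
  simp [(hasFDerivAt_spatialGradient hw x).fderiv, inner_rieszCLM_apply]

theorem fderiv_spatialGradient_time_eq {H : E → ℝ} (hH : Differentiable ℝ H) {w : ℝ × E → ℝ}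
    (hw : ContDiff ℝ 2 w) {s : ℝ}
    (hpde : ∀ q, fderiv ℝ w (s, q) (1, 0) + H (spatialGradient w (s, q)) = 0) (q : E) :
    fderiv ℝ (spatialGradient w) (s, q) (1, 0)
      = -fderiv ℝ (spatialGradient w) (s, q) (0, gradient H (spatialGradient w (s, q))) := by
  set x : ℝ × E := (s, q)
  set D2 := fderiv ℝ (fderiv ℝ w) x
  set g := gradient H (spatialGradient w x)
  have hsymm : IsSymmSndFDerivAt ℝ w x := hw.contDiffAt.isSymmSndFDerivAt (by simp)
  have hD2 : HasFDerivAt (fderiv ℝ w) D2 x :=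
    ((hw.fderiv_right (m := 1) (by norm_num)).differentiable one_ne_zero x).hasFDerivAt
  have hslice : ∀ z : E, D2 (0, z) (1, 0) + D2 (0, z) (0, g) = 0 := by
    intro z
    have hφ : HasFDerivAt (fun y => fderiv ℝ w (s, y) (1, 0) + H (spatialGradient w (s, y))) _ q :=
      ((hD2.comp q (hasFDerivAt_prodMk_right s q)).clm_apply (hasFDerivAt_const (1, 0) q)).add
        ((hH _).hasFDerivAt.comp q
          ((hasFDerivAt_spatialGradient hw x).comp q (hasFDerivAt_prodMk_right s q)))
    rw [funext hpde] at hφ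
    have h0 := congrArg (fun L => L z) (hφ.unique (hasFDerivAt_const 0 q))
    simp only [ContinuousLinearMap.comp_zero, zero_add, add_apply, ContinuousLinearMap.flip_apply,
      ContinuousLinearMap.comp_apply, ContinuousLinearMap.inr_apply,
      ContinuousLinearMap.precomp_apply, ← inner_gradient_left, zero_apply] at h0
    rw [real_inner_comm, inner_rieszCLM_apply] at h0
    simpa using h0
  refine ext_inner_right ℝ fun z => ?_
  rw [inner_neg_left, inner_fderiv_spatialGradient hw, inner_fderiv_spatialGradient hw, hsymm,
    hsymm (0, g)]
  linarith [hslice z]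

theorem spatialGradient_eqOn_characteristic {H : E → ℝ} (hH : ContDiff ℝ 2 H) {w : ℝ × E → ℝ}
    (hw : ContDiff ℝ 2 w) {T : ℝ}
    (hpde : ∀ x : ℝ × E, x.1 ∈ Icc 0 T → fderiv ℝ w x (1, 0) + H (spatialGradient w x) = 0)
    {q₀ p₀ : E} (hp₀ : spatialGradient w (0, q₀) = p₀) :
    EqOn (fun s => spatialGradient w (s, q₀ + s • gradient H p₀)) (fun _ => p₀) (Icc 0 T) := by
  set v := gradient H p₀
  have hγ := hasDerivAt_prodMk_add_smul q₀ v
  refine eqOn_const_of_hasDerivAt_apply_sub (hH.gradient (n := 1)).locallyLipschitz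
    (A := fun s => fderiv ℝ (spatialGradient w) (s, q₀ + s • v) ∘L .inr ℝ ℝ E) ?_
    (fun s hs => ?_) (by simpa using hp₀)
  · exact ((((contDiff_spatialGradient hw).continuous_fderiv one_ne_zero).comp
      (continuous_iff_continuousAt.2 fun s => (hγ s).continuousAt)).clm_comp
      continuous_const).continuousOn
  · refine (((contDiff_spatialGradient hw).differentiable one_ne_zero _).hasFDerivAt.comp_hasDerivAt
      s (hγ s)).congr_deriv ?_
    rw [show ((1 : ℝ), v) = (1, 0) + (0, v) by simp,
      map_add, fderiv_spatialGradient_time_eq (hH.differentiable (by norm_num)) hw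
        (fun q => hpde (s, q) hs), neg_add_eq_sub, ← map_sub, Prod.mk_sub_mk, sub_self]
    rfl

theorem apply_characteristic_eq {H : E → ℝ} (hH : ContDiff ℝ 2 H) {w : ℝ × E → ℝ}
    (hw : ContDiff ℝ 2 w) {T : ℝ}
    (hpde : ∀ x : ℝ × E, x.1 ∈ Icc 0 T → fderiv ℝ w x (1, 0) + H (spatialGradient w x) = 0)
    {q₀ p₀ : E} (hp₀ : spatialGradient w (0, q₀) = p₀) {t : ℝ} (ht : t ∈ Icc 0 T) :
    w (t, q₀ + t • gradient H p₀) = w (0, q₀) + t * (inner ℝ p₀ (gradient H p₀) - H p₀) := by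
  set v := gradient H p₀
  have hw1 : Differentiable ℝ w := hw.differentiable (by norm_num)
  have hder : ∀ s ∈ Ico 0 t,
      HasDerivWithinAt (fun s => w (s, q₀ + s • v)) (inner ℝ p₀ v - H p₀) (Ici s) s := by
    intro s hs
    have hsT : s ∈ Icc 0 T := ⟨hs.1, hs.2.le.trans ht.2⟩
    have hp : spatialGradient w (s, q₀ + s • v) = p₀ :=
      spatialGradient_eqOn_characteristic hH hw hpde hp₀ hsT
    refine ((hw1 _).hasFDerivAt.comp_hasDerivAt s
      (hasDerivAt_prodMk_add_smul q₀ v s)).congr_deriv ?_ |>.hasDerivWithinAt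
    rw [show ((1 : ℝ), v) = (1, 0) + (0, v) by simp, map_add, ← inner_spatialGradient hw1]
    have := hpde (s, q₀ + s • v) hsT
    rw [hp] at this ⊢
    linarith
  have hline : ∀ s ∈ Ico 0 t, HasDerivWithinAt (fun s => w (0, q₀) + s * (inner ℝ p₀ v - H p₀))
      (inner ℝ p₀ v - H p₀) (Ici s) s := fun s _ => by
    simpa using (((hasDerivAt_id s).mul_const (inner ℝ p₀ v - H p₀)).const_add
      (w (0, q₀))).hasDerivWithinAt
  have hwc := hw.continuous
  simpa using eq_of_has_deriv_right_eq hder hline (by fun_prop) (by fun_prop) (by simp) t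
    ⟨ht.1, le_rfl⟩

end Characteristics

theorem eq_gradient_of_mem_clarke {d : ℕ} {f : Ed d → ℝ} (hf : ContDiff ℝ 1 f) {q p : Ed d}
    (hp : p ∈ clarke f q) : p = gradient f q := by
  have hcont : Continuous (gradient f) := (hf.gradient (n := 0)).continuous
  have hsub : {p | ∃ qn : ℕ → Ed d, (∀ n, DifferentiableAt ℝ f (qn n)) ∧
      Tendsto qn atTop (𝓝 q) ∧ Tendsto (fun n => gradient f (qn n)) atTop (𝓝 p)}
      ⊆ {gradient f q} := by
    rintro p' ⟨qn, -, hq, hg⟩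
    exact tendsto_nhds_unique hg ((hcont.tendsto q).comp hq)
  simpa using convexHull_mono hsub hp

theorem LipschitzWith.of_attained_infimum {α : Type*} [PseudoMetricSpace α] {F : Set (α → ℝ)}
    {K : NNReal} (hF : ∀ f ∈ F, LipschitzWith K f) {u : α → ℝ} (hle : ∀ x, ∀ f ∈ F, u x ≤ f x)
    (hex : ∀ x, ∃ f ∈ F, f x = u x) : LipschitzWith K u :=
  LipschitzWith.of_le_add_mul K fun x y => by
    obtain ⟨f, hf, hfy⟩ := hex y
    calc u x ≤ f x := hle x f hf
      _ ≤ f y + K * dist x y := (hF f hf).le_add_mul x y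
      _ = u y + K * dist x y := by rw [hfy]

theorem statement19_general (d : ℕ) (H : Ed d → ℝ)
    (hH : ContDiff ℝ 2 H)
    (R : ℝ → (Ed d → ℝ) → Ed d → ℝ) (hR : IsVariationalOperator H R)
    (F : Set (Ed d → ℝ))
    (hFlip : ∃ K, ∀ f ∈ F, LipschitzWith K f)
    (hFC2 : ∀ f ∈ F, ContDiff ℝ 2 f)
    (u : Ed d → ℝ)
    (humin : ∀ q : Ed d, ∀ f ∈ F, u q ≤ f q)
    (huatt : ∀ q : Ed d, ∃ f ∈ F, f q = u q)
    (hclarke : ∀ q : Ed d, ∀ p ∈ clarke u q, ∃ f ∈ F, f q = u q ∧ gradient f q = p)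
    (T : ℝ)
    (uF : (Ed d → ℝ) → ℝ × Ed d → ℝ)
    (huFC2 : ∀ f ∈ F, ContDiff ℝ 2 (uF f))
    (huFpde : ∀ f ∈ F, ∀ x : ℝ × Ed d, x.1 ∈ Set.Icc 0 T →
      deriv (fun s => uF f (s, x.2)) x.1
        + H (gradient (fun q => uF f (x.1, q)) x.2) = 0)
    (huF0 : ∀ f ∈ F, ∀ q, uF f (0, q) = f q) :
    ∀ t : ℝ, 0 ≤ t → t ≤ T → ∀ q : Ed d,
      (∀ f ∈ F, R t u q ≤ uF f (t, q)) ∧ (∃ f ∈ F, uF f (t, q) = R t u q) := by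
  obtain ⟨-, hmono, -, hvar⟩ := hR
  obtain ⟨K, hK⟩ := hFlip
  have hu : LipschitzWith K u := LipschitzWith.of_attained_infimum hK humin huatt
  intro t ht0 htT q
  have hchar : ∀ f ∈ F, ∀ q₀, uF f (t, q₀ + t • gradient H (gradient f q₀)) = f q₀ +
      t * (inner ℝ (gradient f q₀) (gradient H (gradient f q₀)) - H (gradient f q₀)) := by
    intro f hf q₀
    have hpde : ∀ x : ℝ × Ed d, x.1 ∈ Icc 0 T →
        fderiv ℝ (uF f) x (1, 0) + H (spatialGradient (uF f) x) = 0 := fun x hx => by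
      rw [← deriv_apply_prodMk_left ((huFC2 f hf).differentiable (by norm_num))]
      exact huFpde f hf x hx
    have hp₀ : spatialGradient (uF f) (0, q₀) = gradient f q₀ := by
      simp only [spatialGradient, huF0 f hf]
    rw [apply_characteristic_eq hH (huFC2 f hf) hpde hp₀ ⟨ht0, htT⟩, huF0 f hf]
  refine ⟨fun f hf => ?_, ?_⟩
  · obtain ⟨q₀, p₀, hp₀, rfl, hRf⟩ := hvar t ht0 f ⟨K, hK f hf⟩ q
    obtain rfl := eq_gradient_of_mem_clarke ((hFC2 f hf).of_le one_le_two) hp₀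
    calc R t u _ ≤ R t f _ := hmono t ht0 u f ⟨K, hu⟩ ⟨K, hK f hf⟩ (fun x => humin x f hf) _
      _ = uF f _ := by rw [hRf, hchar f hf]
  · obtain ⟨q₀, p₀, hp₀, rfl, hRu⟩ := hvar t ht0 u ⟨K, hu⟩ q
    obtain ⟨f, hf, hfq₀, rfl⟩ := hclarke q₀ p₀ hp₀
    exact ⟨f, hf, by rw [hchar f hf, hRu, hfq₀]⟩

/-- If `u` is the minimum of a family `F` of `C²` equi-Lipschitz functions
with second derivatives bounded by `B` (every Clarke derivative of `u` being attained by the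
derivative of a member of the family), and if `u_f` is the `C²` solution of the Cauchy
problem with initial condition `f` on `[0,T]`, `0 < T ≤ 1/(BC)`, then the variational
solution with initial condition `u` is `R^t u(q) = min_{f ∈ F} u_f(t,q)`. -/
theorem statement19 (d : ℕ) (H : Ed d → ℝ) (C : ℝ)
    (hH : ContDiff ℝ 2 H) (hC : ∀ p, ‖iteratedFDeriv ℝ 2 H p‖ ≤ C)
    (R : ℝ → (Ed d → ℝ) → Ed d → ℝ) (hR : IsVariationalOperator H R)
    (F : Set (Ed d → ℝ)) (B : ℝ)
    (hFlip : ∃ K, ∀ f ∈ F, LipschitzWith K f)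
    (hFC2 : ∀ f ∈ F, ContDiff ℝ 2 f)
    (hFB : ∀ f ∈ F, ∀ q, ‖iteratedFDeriv ℝ 2 f q‖ ≤ B)
    (u : Ed d → ℝ)
    (humin : ∀ q : Ed d, ∀ f ∈ F, u q ≤ f q)
    (huatt : ∀ q : Ed d, ∃ f ∈ F, f q = u q)
    (hclarke : ∀ q : Ed d, ∀ p ∈ clarke u q, ∃ f ∈ F, f q = u q ∧ gradient f q = p)
    (T : ℝ) (hT0 : 0 < T) (hT : T ≤ 1 / (B * C))
    (uF : (Ed d → ℝ) → ℝ × Ed d → ℝ)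
    (huFC2 : ∀ f ∈ F, ContDiff ℝ 2 (uF f))
    (huFpde : ∀ f ∈ F, ∀ x : ℝ × Ed d, x.1 ∈ Set.Icc 0 T →
      deriv (fun s => uF f (s, x.2)) x.1
        + H (gradient (fun q => uF f (x.1, q)) x.2) = 0)
    (huF0 : ∀ f ∈ F, ∀ q, uF f (0, q) = f q) :
    ∀ t : ℝ, 0 ≤ t → t ≤ T → ∀ q : Ed d,
      (∀ f ∈ F, R t u q ≤ uF f (t, q)) ∧ (∃ f ∈ F, uF f (t, q) = R t u q) :=
  statement19_general d H hH R hR F hFlip hFC2 u humin huatt hclarke T uF huFC2 huFpde huF0
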